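/- arXiv:2605.07002 — 5 statements merged into one kernel-verified Lean document; each statement's English description precedes it below -/
import Mathlib

section
/- (Duality of the model's and auditor's hypotheses.) Let s be an asymptotically consistent auditing strategy. Then the model's alternative and the limiting auditor's null are equivalent, and the model's null and the limiting auditor's alternative are equivalent; that is: (∃ S ∈ Sε, V S < q) ↔ (∃ τ ∈ ℕ, ∀ t ≥ τ, V (s t) < q), and (∀ S ∈ Sε, V S ≥ q) ↔ (∀ τ ∈ ℕ, ∃ t ≥ τ, V (s t) ≥ q). -/
open Filter

section

variable {A ι : Type*} {V : A → ℝ} {q : ℝ} {Sε : Set A} {l : Filter ι} [l.NeBot] {s : ι → A}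

theorem exists_mem_lt_iff_eventually_lt (hs : ∀ t, s t ∈ Sε)
    (hconsistent : (∃ S ∈ Sε, V S < q) → ∃ L : ℝ, Tendsto (fun t => V (s t)) l (nhds L) ∧ L < q) :
    (∃ S ∈ Sε, V S < q) ↔ ∀ᶠ t in l, V (s t) < q := by
  constructor
  · intro h
    obtain ⟨L, hL, hLq⟩ := hconsistent h
    exact hL.eventually (eventually_lt_nhds hLq)
  · intro h
    obtain ⟨t, ht⟩ := h.exists
    exact ⟨s t, hs t, ht⟩

theorem forall_mem_ge_iff_frequently_ge (hs : ∀ t, s t ∈ Sε)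
    (hconsistent : (∃ S ∈ Sε, V S < q) → ∃ L : ℝ, Tendsto (fun t => V (s t)) l (nhds L) ∧ L < q) :
    (∀ S ∈ Sε, V S ≥ q) ↔ ∃ᶠ t in l, V (s t) ≥ q := by
  simpa only [not_exists, not_and, not_lt, not_eventually] using
    (exists_mem_lt_iff_eventually_lt hs hconsistent).not

end

/-- Duality of the model's and auditor's hypotheses: under an asymptotically consistent
auditing strategy, the model's alternative is equivalent to the limiting auditor's null,
and the model's null is equivalent to the limiting auditor's alternative. -/
theorem duality_model_auditor
    {A : Type*} (V : A → ℝ) (q : ℝ) (Sε : Set A) (s : ℕ → A)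
    (hs : ∀ t, s t ∈ Sε)
    (hconsistent : (∃ S ∈ Sε, V S < q) →
      ∃ L : ℝ, Tendsto (fun t => V (s t)) atTop (nhds L) ∧ L < q) :
    ((∃ S ∈ Sε, V S < q) ↔ (∃ τ : ℕ, ∀ t ≥ τ, V (s t) < q)) ∧
    ((∀ S ∈ Sε, V S ≥ q) ↔ (∀ τ : ℕ, ∃ t ≥ τ, V (s t) ≥ q)) :=
  ⟨(exists_mem_lt_iff_eventually_lt hs hconsistent).trans eventually_atTop,
    (forall_mem_ge_iff_frequently_ge hs hconsistent).trans frequently_atTop⟩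
end

section
/- (No power before the budget for testing the auditor's null.) Let F : (ℕ → A) → ℕ → ℝ be the power functional of an anytime-valid testing procedure, assumed to depend only on the observed prefix: for all sequences S, S' : ℕ → A and all t, if S k = S' k for every k ≤ t then F S t = F S' t. For m' ∈ ℕ, say a sequence S satisfies the singleton auditor's null H0^{aud,m'} if V (S t) < q for all t ≥ m', and satisfies the singleton auditor's alternative H1^{aud,m'} if there exists t ≥ m' with V (S t) ≥ q. Fix a budget m ∈ ℕ and level α ∈ ℝ, and assume (i) there exists a* ∈ A with V a* < q, and (ii) for every m' with 1 ≤ m' ≤ m, every sequence S satisfying H0^{aud,m'}, and every t < m', one has F S t ≤ α. Then for every m' with 1 ≤ m' ≤ m, every sequence S satisfying H1^{aud,m'}, and every t < m', one also has F S t ≤ α. -/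
/-!
Before time `m'` a prefix-determined procedure cannot tell a sequence `S` from the spliced
sequence that follows `S` up to time `m' - 1` and then selects a failing subgroup `a*` forever.
The spliced sequence satisfies the null `H0^{aud,m'}`, so the level bound applies to it, and
hence to `S`, whatever `S` does from time `m'` on.
-/

open Set

lemma apply_piecewise_Iio_eq {A β : Type*} {F : (ℕ → A) → ℕ → β}
    (hprefix : ∀ (S S' : ℕ → A) (t : ℕ), (∀ k ≤ t, S k = S' k) → F S t = F S' t)
    (S S' : ℕ → A) {n t : ℕ} (ht : t < n) :
    F ((Iio n).piecewise S S') t = F S t :=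
  hprefix _ _ t fun _ hk => piecewise_eq_of_mem _ _ _ (lt_of_le_of_lt hk ht)

lemma apply_piecewise_Iio_const_lt {A : Type*} {V : A → ℝ} {q : ℝ} {a : A} (ha : V a < q)
    (S : ℕ → A) {n t : ℕ} (ht : n ≤ t) :
    V ((Iio n).piecewise S (fun _ => a) t) < q := by
  rwa [piecewise_eq_of_notMem _ _ _ (show t ∉ Iio n from not_lt.2 ht)]

theorem le_of_lt_of_level_under_null {A : Type*} {V : A → ℝ} {q : ℝ} {F : (ℕ → A) → ℕ → ℝ}
    {α : ℝ} {n : ℕ}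
    (hprefix : ∀ (S S' : ℕ → A) (t : ℕ), (∀ k ≤ t, S k = S' k) → F S t = F S' t)
    (hfail : ∃ a : A, V a < q)
    (hlevel : ∀ S : ℕ → A, (∀ t ≥ n, V (S t) < q) → ∀ t < n, F S t ≤ α)
    (S : ℕ → A) {t : ℕ} (ht : t < n) :
    F S t ≤ α := by
  obtain ⟨a, ha⟩ := hfail
  rw [← apply_piecewise_Iio_eq hprefix S (fun _ => a) ht]
  exact hlevel _ (fun _ hu => apply_piecewise_Iio_const_lt ha S hu) t ht

/-- No power before the budget for testing the auditor's null: if an anytime-valid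
testing procedure (whose power functional `F` depends only on the observed prefix)
has Type-I error at most `α` before time `m'` under every sequence satisfying the
singleton auditor's null `H0^{aud,m'}`, for every `1 ≤ m' ≤ m`, then its power before
time `m'` under any sequence satisfying the singleton auditor's alternative
`H1^{aud,m'}` is also at most `α`, for every `1 ≤ m' ≤ m`. -/
theorem no_power_before_budget
    {A : Type*} (V : A → ℝ) (q : ℝ) (F : (ℕ → A) → ℕ → ℝ)
    (m : ℕ) (α : ℝ)
    (hprefix : ∀ (S S' : ℕ → A) (t : ℕ), (∀ k ≤ t, S k = S' k) → F S t = F S' t)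
    (hfail : ∃ a : A, V a < q)
    (hlevel : ∀ m', 1 ≤ m' → m' ≤ m → ∀ S : ℕ → A,
      (∀ t ≥ m', V (S t) < q) → ∀ t < m', F S t ≤ α) :
    ∀ m', 1 ≤ m' → m' ≤ m → ∀ S : ℕ → A,
      (∃ t ≥ m', V (S t) ≥ q) → ∀ t < m', F S t ≤ α :=
  fun m' h1 hm S _ _ ht => le_of_lt_of_level_under_null hprefix hfail (hlevel m' h1 hm) S ht
end

section
/- (The LR process for the model's null is a test supermartingale.) Let (Ω, 𝓕, μ) be a probability space with μ a probability measure and (𝓕_t)_{t∈ℕ} a filtration. Let Y : ℕ → Ω → ℝ be a process with Y t taking values in {0,1} and Y t strongly 𝓕_t-measurable for each t ≥ 1. Let q, δ ∈ ℝ with 0 < q − δ and q < 1 and δ > 0, and suppose that for every t ≥ 1 the conditional expectation μ[Y t | 𝓕_{t−1}] ≥ q holds μ-almost everywhere. Define M_0 = 1 and M_t = ∏_{k=1}^{t} ( Y k · ((q − δ)/q) + (1 − Y k) · ((1 − q + δ)/(1 − q)) ). Then (M_t) is a nonnegative supermartingale with respect to (𝓕_t) and μ, with E[M_0] = 1; in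 particular E[M_t] ≤ 1 for every t. -/
open MeasureTheory Finset

/-- The likelihood-ratio process for the model's null is a test supermartingale:
for binary observations with conditional mean at least `q`, the product of one-step
Bernoulli(q−δ)/Bernoulli(q) likelihood ratios is a nonnegative supermartingale with
initial expectation `1`, hence expectation at most `1` at every time. -/
theorem lr_model_test_supermartingale
    {Ω : Type*} {m0 : MeasurableSpace Ω} (μ : Measure Ω) [IsProbabilityMeasure μ]
    (ℱ : Filtration ℕ m0) (Y : ℕ → Ω → ℝ)
    (hbin : ∀ t ≥ 1, ∀ ω, Y t ω = 0 ∨ Y t ω = 1)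
    (hmeas : ∀ t ≥ 1, StronglyMeasurable[ℱ t] (Y t))
    (q δ : ℝ) (hqδ : 0 < q - δ) (hq : q < 1) (hδ : 0 < δ)
    (hnull : ∀ t ≥ 1, ∀ᵐ ω ∂μ, q ≤ (μ[Y t | ℱ (t - 1)]) ω)
    (M : ℕ → Ω → ℝ)
    (hM : ∀ t ω, M t ω =
      ∏ k ∈ Finset.Icc 1 t,
        (Y k ω * ((q - δ) / q) + (1 - Y k ω) * ((1 - q + δ) / (1 - q)))) :
    Supermartingale M ℱ μ ∧ (∀ t ω, 0 ≤ M t ω) ∧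
      (∫ ω, M 0 ω ∂μ) = 1 ∧ ∀ t, (∫ ω, M t ω ∂μ) ≤ 1 := by
  have hq0 : 0 < q := by linarith
  have h1q : 0 < 1 - q := by linarith
  set a : ℝ := (q - δ) / q with ha_def
  set b : ℝ := (1 - q + δ) / (1 - q) with hb_def
  have ha0 : 0 < a := div_pos hqδ hq0
  have hb1 : 1 ≤ b := by
    rw [hb_def, le_div_iff₀ h1q]; linarith
  have hab : a ≤ b := by
    have : a ≤ 1 := by
      rw [ha_def, div_le_one hq0]; linarith
    linarith
  set r : ℕ → Ω → ℝ := fun k ω => Y k ω * a + (1 - Y k ω) * b with hr_def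
  -- pointwise bounds on r
  have hr0 : ∀ k, 1 ≤ k → ∀ ω, 0 ≤ r k ω := by
    intro k hk ω
    rcases hbin k hk ω with h | h <;> simp [hr_def, h] <;> linarith
  have hrb : ∀ k, 1 ≤ k → ∀ ω, r k ω ≤ b := by
    intro k hk ω
    rcases hbin k hk ω with h | h <;> simp [hr_def, h] <;> linarith
  have hMr : ∀ t ω, M t ω = ∏ k ∈ Finset.Icc 1 t, r k ω := hM
  -- nonnegativity and upper bound of M
  have hM0 : ∀ t ω, 0 ≤ M t ω := by
    intro t ω
    rw [hMr]
    exact Finset.prod_nonneg fun k hk => hr0 k (Finset.mem_Icc.mp hk).1 ω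
  have hMb : ∀ t ω, M t ω ≤ b ^ t := by
    intro t ω
    rw [hMr]
    calc ∏ k ∈ Finset.Icc 1 t, r k ω ≤ ∏ k ∈ Finset.Icc 1 t, b := by
          refine Finset.prod_le_prod (fun k hk => hr0 k (Finset.mem_Icc.mp hk).1 ω)
            (fun k hk => hrb k (Finset.mem_Icc.mp hk).1 ω)
      _ = b ^ t := by rw [Finset.prod_const, Nat.card_Icc]; norm_num
  -- measurability
  have hr_meas : ∀ k, 1 ≤ k → StronglyMeasurable[ℱ k] (r k) := by
    intro k hk
    exact ((hmeas k hk).mul_const a).add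
      (((stronglyMeasurable_const.sub (hmeas k hk))).mul_const b)
  have hM_meas : ∀ t, StronglyMeasurable[ℱ t] (M t) := by
    intro t
    have : M t = fun ω => ∏ k ∈ Finset.Icc 1 t, r k ω := funext (hMr t)
    rw [this]
    exact Finset.stronglyMeasurable_fun_prod _ fun k hk =>
      ((hr_meas k (Finset.mem_Icc.mp hk).1).mono (ℱ.mono (Finset.mem_Icc.mp hk).2))
  -- integrability
  have hM_int : ∀ t, Integrable (M t) μ := by
    intro t
    refine Integrable.mono' (integrable_const (b ^ t))
      ((hM_meas t).mono (ℱ.le t)).aestronglyMeasurable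
      (ae_of_all _ fun ω => ?_)
    rw [Real.norm_eq_abs, abs_of_nonneg (hM0 t ω)]
    exact hMb t ω
  have hr_int : ∀ k, 1 ≤ k → Integrable (r k) μ := by
    intro k hk
    refine Integrable.mono' (integrable_const b)
      ((hr_meas k hk).mono (ℱ.le k)).aestronglyMeasurable
      (ae_of_all _ fun ω => ?_)
    rw [Real.norm_eq_abs, abs_of_nonneg (hr0 k hk ω)]
    exact hrb k hk ω
  -- M (t+1) = M t * r (t+1)
  have hMsucc : ∀ t, M (t + 1) = M t * r (t + 1) := by
    intro t
    funext ω
    rw [Pi.mul_apply, hMr, hMr]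
    exact Finset.prod_Icc_succ_top (Nat.le_add_left 1 t) _
  -- conditional expectation of r (t+1) is ≤ 1 a.e.
  have hr_cond : ∀ t, (μ[r (t + 1) | ℱ t]) ≤ᵐ[μ] fun _ => (1 : ℝ) := by
    intro t
    have hrw : r (t + 1) = (fun _ : Ω => b) + (a - b) • Y (t + 1) := by
      funext ω; simp [hr_def]; ring
    have h1 : μ[r (t + 1) | ℱ t] =ᵐ[μ]
        (fun _ : Ω => b) + (a - b) • μ[Y (t + 1) | ℱ t] := by
      rw [hrw]
      have hYint : Integrable (Y (t + 1)) μ := by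
        refine Integrable.mono' (integrable_const 1)
          ((hmeas (t + 1) (Nat.le_add_left 1 t)).mono (ℱ.le _)).aestronglyMeasurable
          (ae_of_all _ fun ω => ?_)
        rcases hbin (t + 1) (Nat.le_add_left 1 t) ω with h | h <;> simp [h]
      calc μ[(fun _ : Ω => b) + (a - b) • Y (t + 1) | ℱ t]
          =ᵐ[μ] μ[(fun _ : Ω => b) | ℱ t] + μ[(a - b) • Y (t + 1) | ℱ t] :=
            condExp_add (integrable_const b) (hYint.smul (a - b)) _
        _ =ᵐ[μ] (fun _ : Ω => b) + (a - b) • μ[Y (t + 1) | ℱ t] := by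
            filter_upwards [condExp_smul (μ := μ) (m := ℱ t) (a - b) (Y (t + 1))] with ω hω
            simp [condExp_const (ℱ.le t), hω]
    have h2 := hnull (t + 1) (Nat.le_add_left 1 t)
    simp only [Nat.add_sub_cancel] at h2
    filter_upwards [h1, h2] with ω h1ω h2ω
    rw [h1ω]
    simp only [Pi.add_apply, Pi.smul_apply, smul_eq_mul]
    have hkey : b + (a - b) * q = 1 := by
      rw [ha_def, hb_def]; field_simp; ring
    have hablt : a - b ≤ 0 := by linarith
    nlinarith [mul_le_mul_of_nonpos_left h2ω hablt]
  -- supermartingale property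
  have hadp : StronglyAdapted ℱ M := fun t => hM_meas t
  have hcond : ∀ t, μ[M (t + 1) | ℱ t] ≤ᵐ[μ] M t := by
    intro t
    have hMrint : Integrable (M t * r (t + 1)) μ := by
      rw [← hMsucc]; exact hM_int (t + 1)
    have hpull : μ[M (t + 1) | ℱ t] =ᵐ[μ] M t * μ[r (t + 1) | ℱ t] := by
      rw [hMsucc]
      exact condExp_mul_of_stronglyMeasurable_left (hM_meas t) hMrint
        (hr_int (t + 1) (Nat.le_add_left 1 t))
    filter_upwards [hpull, hr_cond t] with ω h1ω h2ω
    rw [h1ω, Pi.mul_apply]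
    calc M t ω * (μ[r (t + 1) | ℱ t]) ω ≤ M t ω * 1 :=
          mul_le_mul_of_nonneg_left h2ω (hM0 t ω)
      _ = M t ω := mul_one _
  have hsup : Supermartingale M ℱ μ := supermartingale_nat hadp hM_int hcond
  -- M 0 = 1
  have hM0eq : ∀ ω, M 0 ω = 1 := by
    intro ω; rw [hMr]; simp
  have hint0 : (∫ ω, M 0 ω ∂μ) = 1 := by
    simp only [hM0eq]
    simp [measure_univ]
  refine ⟨hsup, hM0, hint0, fun t => ?_⟩
  have h1 : (∫ ω, M t ω ∂μ) = ∫ ω, (μ[M t | ℱ 0]) ω ∂μ := (integral_condExp (ℱ.le 0)).symm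
  have h2 : (∫ ω, (μ[M t | ℱ 0]) ω ∂μ) ≤ ∫ ω, M 0 ω ∂μ :=
    integral_mono_ae integrable_condExp (hM_int 0) (hsup.2.1 0 t (Nat.zero_le t))
  rw [h1]
  exact h2.trans_eq hint0
end

section
/- (The LR-UI process for the model's null is a test supermartingale.) Let (Ω, 𝓕, μ) be a probability space with μ a probability measure and (𝓕_t)_{t∈ℕ} a filtration. Let Y : ℕ → Ω → ℝ be a process with Y t taking values in {0,1} and Y t strongly 𝓕_t-measurable for each t ≥ 1. Let q ∈ (0,1) and let γ̂ : ℕ → Ω → ℝ be a predictable sequence of bets: γ̂ (t−1) is strongly 𝓕_{t−1}-measurable and takes values in the interval [c, q] for some constant c > 0. Suppose that for every t ≥ 1, μ[Y t | 𝓕_{t−1}] ≥ q holds μ-almost everywhere. Define M_0 = 1 and M_t = ∏_{k=1}^{t} ( Y k · (γ̂ (k−1)/q) + (1 − Y k) · ((1 − γ̂ (k−1))/(1 − q)) ). Then (M_t) is a nonnegative supermartingale with respect to (𝓕_t) and μ, with E[M_0] = 1; in particular E[M_t] ≤ 1 for every t. -/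
open MeasureTheory Finset

private lemma integrable_of_bdd {Ω : Type*} {m0 : MeasurableSpace Ω} {μ : Measure Ω}
    [IsFiniteMeasure μ] {f : Ω → ℝ} (hf : AEStronglyMeasurable f μ) {C : ℝ}
    (h : ∀ ω, |f ω| ≤ C) : Integrable f μ :=
  ⟨hf, HasFiniteIntegral.of_bounded (C := C) (Filter.Eventually.of_forall h)⟩

/-- The LR-UI process for the model's null is a test supermartingale: for binary
observations with conditional mean at least `q` and a predictable sequence of bets
`γ̂` with values in `[c, q]` for some `c > 0`, the product of one-step
Bernoulli(γ̂)/Bernoulli(q) likelihood ratios is a nonnegative supermartingale with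
initial expectation `1`, hence expectation at most `1` at every time. -/
theorem lr_ui_model_test_supermartingale
    {Ω : Type*} {m0 : MeasurableSpace Ω} (μ : Measure Ω) [IsProbabilityMeasure μ]
    (ℱ : Filtration ℕ m0) (Y : ℕ → Ω → ℝ)
    (hbin : ∀ t ≥ 1, ∀ ω, Y t ω = 0 ∨ Y t ω = 1)
    (hmeas : ∀ t ≥ 1, StronglyMeasurable[ℱ t] (Y t))
    (q : ℝ) (hq0 : 0 < q) (hq1 : q < 1)
    (γhat : ℕ → Ω → ℝ) (c : ℝ) (hc : 0 < c)
    (hγmeas : ∀ t ≥ 1, StronglyMeasurable[ℱ (t - 1)] (γhat (t - 1)))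
    (hγrange : ∀ t ≥ 1, ∀ ω, γhat (t - 1) ω ∈ Set.Icc c q)
    (hnull : ∀ t ≥ 1, ∀ᵐ ω ∂μ, q ≤ (μ[Y t | ℱ (t - 1)]) ω)
    (M : ℕ → Ω → ℝ)
    (hM : ∀ t ω, M t ω =
      ∏ k ∈ Finset.Icc 1 t,
        (Y k ω * (γhat (k - 1) ω / q) +
          (1 - Y k ω) * ((1 - γhat (k - 1) ω) / (1 - q)))) :
    Supermartingale M ℱ μ ∧ (∀ t ω, 0 ≤ M t ω) ∧
      (∫ ω, M 0 ω ∂μ) = 1 ∧ ∀ t, (∫ ω, M t ω ∂μ) ≤ 1 := by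
  have hq1' : (0:ℝ) < 1 - q := by linarith
  set K : ℝ := 1 / (1 - q) + 1 with hK
  have hq1inv : (0:ℝ) < 1 / (1 - q) := by positivity
  have hK1 : (1:ℝ) ≤ K := by rw [hK]; linarith
  have hKq : 1 / (1 - q) ≤ K := by rw [hK]; linarith
  have hK0 : (0:ℝ) ≤ K := by linarith
  -- the one-step factors
  set g : ℕ → Ω → ℝ := fun k ω =>
    Y k ω * (γhat (k - 1) ω / q) + (1 - Y k ω) * ((1 - γhat (k - 1) ω) / (1 - q)) with hg
  -- bounds on the factors
  have hγ : ∀ k ≥ 1, ∀ ω, c ≤ γhat (k - 1) ω ∧ γhat (k - 1) ω ≤ q := fun k hk ω =>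
    ⟨(hγrange k hk ω).1, (hγrange k hk ω).2⟩
  have hg_nonneg : ∀ k ≥ 1, ∀ ω, 0 ≤ g k ω := by
    intro k hk ω
    rcases hγ k hk ω with ⟨h1, h2⟩
    have hd1 : 0 ≤ γhat (k - 1) ω / q := div_nonneg (le_trans hc.le h1) hq0.le
    have hd2 : 0 ≤ (1 - γhat (k - 1) ω) / (1 - q) := div_nonneg (by linarith) hq1'.le
    rcases hbin k hk ω with h | h <;> simp only [hg, h] <;> nlinarith
  have hg_le : ∀ k ≥ 1, ∀ ω, g k ω ≤ K := by
    intro k hk ω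
    rcases hγ k hk ω with ⟨h1, h2⟩
    have hd1 : γhat (k - 1) ω / q ≤ 1 := by rw [div_le_one hq0]; exact h2
    have hd1' : 0 ≤ γhat (k - 1) ω / q := div_nonneg (le_trans hc.le h1) hq0.le
    have hd2 : (1 - γhat (k - 1) ω) / (1 - q) ≤ 1 / (1 - q) := by gcongr; linarith
    have hd2' : 0 ≤ (1 - γhat (k - 1) ω) / (1 - q) := div_nonneg (by linarith) hq1'.le
    rcases hbin k hk ω with h | h <;> simp only [hg, h] <;> nlinarith
  have hg_meas : ∀ k ≥ 1, StronglyMeasurable[ℱ k] (g k) := by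
    intro k hk
    have h1 : StronglyMeasurable[ℱ k] (γhat (k - 1)) :=
      (hγmeas k hk).mono (ℱ.mono (Nat.sub_le k 1))
    have : g k = fun ω => Y k ω * (γhat (k - 1) ω * q⁻¹) +
        (1 - Y k ω) * ((1 - γhat (k - 1) ω) * (1 - q)⁻¹) := by
      funext ω; simp [hg, div_eq_mul_inv]
    rw [this]
    exact (((hmeas k hk).mul (h1.mul stronglyMeasurable_const)).add
      ((stronglyMeasurable_const.sub (hmeas k hk)).mul
        ((stronglyMeasurable_const.sub h1).mul stronglyMeasurable_const)))
  -- M as product of g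
  have hMg : ∀ t, M t = fun ω => ∏ k ∈ Finset.Icc 1 t, g k ω := by
    intro t; funext ω; rw [hM t ω]
  have hM_meas : ∀ t, StronglyMeasurable[ℱ t] (M t) := by
    intro t
    rw [hMg t]
    exact Finset.stronglyMeasurable_fun_prod _ fun k hk =>
      (hg_meas k (mem_Icc.mp hk).1).mono (ℱ.mono (mem_Icc.mp hk).2)
  have hM_nonneg : ∀ t ω, 0 ≤ M t ω := by
    intro t ω
    rw [hM t ω]
    exact Finset.prod_nonneg fun k hk => hg_nonneg k (mem_Icc.mp hk).1 ω
  have hM_le : ∀ t ω, M t ω ≤ K ^ t := by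
    intro t ω
    rw [hM t ω]
    calc (∏ k ∈ Finset.Icc 1 t, g k ω) ≤ ∏ k ∈ Finset.Icc 1 t, K :=
        Finset.prod_le_prod (fun k hk => hg_nonneg k (mem_Icc.mp hk).1 ω)
          (fun k hk => hg_le k (mem_Icc.mp hk).1 ω)
      _ = K ^ t := by simp [Nat.card_Icc]
  have hM_abs : ∀ t ω, |M t ω| ≤ K ^ t := fun t ω => by
    rw [abs_of_nonneg (hM_nonneg t ω)]; exact hM_le t ω
  have hM_int : ∀ t, Integrable (M t) μ := fun t =>
    integrable_of_bdd (((hM_meas t).mono (ℱ.le t)).aestronglyMeasurable) (hM_abs t)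
  -- one-step supermartingale property
  have hstep : ∀ t, μ[M (t + 1) | ℱ t] ≤ᵐ[μ] M t := by
    intro t
    have ht1 : 1 ≤ t + 1 := Nat.le_add_left 1 t
    have hγt : ∀ ω, c ≤ γhat t ω ∧ γhat t ω ≤ q := fun ω => hγ (t + 1) ht1 ω
    have hγtm : StronglyMeasurable[ℱ t] (γhat t) := hγmeas (t + 1) ht1
    set A : Ω → ℝ := fun ω =>
      M t ω * (γhat t ω / q - (1 - γhat t ω) / (1 - q)) with hA
    set B : Ω → ℝ := fun ω => M t ω * ((1 - γhat t ω) / (1 - q)) with hB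
    have hdecomp : M (t + 1) = fun ω => B ω + A ω * Y (t + 1) ω := by
      funext ω
      have h0 : M (t + 1) ω = M t ω * g (t + 1) ω := by
        rw [hM (t + 1) ω, hM t ω, Finset.prod_Icc_succ_top ht1]
      have h1 : g (t + 1) ω = (1 - γhat t ω) / (1 - q) +
          Y (t + 1) ω * (γhat t ω / q - (1 - γhat t ω) / (1 - q)) := by
        simp only [hg, Nat.add_sub_cancel]; ring
      rw [h0, h1]; simp only [hA, hB]; ring
    -- measurability and bounds for A, B
    have hcoef_abs : ∀ ω, |γhat t ω / q - (1 - γhat t ω) / (1 - q)| ≤ K := by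
      intro ω
      rcases hγt ω with ⟨h1, h2⟩
      have ha : 0 ≤ γhat t ω / q := div_nonneg (le_trans hc.le h1) hq0.le
      have ha' : γhat t ω / q ≤ 1 := by rw [div_le_one hq0]; exact h2
      have hb : 0 ≤ (1 - γhat t ω) / (1 - q) := by
        apply div_nonneg _ hq1'.le; linarith
      have hb' : (1 - γhat t ω) / (1 - q) ≤ 1 / (1 - q) := by gcongr; linarith
      calc |γhat t ω / q - (1 - γhat t ω) / (1 - q)|
          ≤ |γhat t ω / q| + |(1 - γhat t ω) / (1 - q)| := abs_sub _ _
        _ ≤ 1 + 1 / (1 - q) := by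
            rw [abs_of_nonneg ha, abs_of_nonneg hb]; exact add_le_add ha' hb'
        _ = K := by rw [hK]; ring
    have hA_meas : StronglyMeasurable[ℱ t] A := by
      have : A = fun ω => M t ω * (γhat t ω * q⁻¹ - (1 - γhat t ω) * (1 - q)⁻¹) := by
        funext ω; simp [hA, div_eq_mul_inv]
      rw [this]
      exact (hM_meas t).mul ((hγtm.mul stronglyMeasurable_const).sub
        ((stronglyMeasurable_const.sub hγtm).mul stronglyMeasurable_const))
    have hB_meas : StronglyMeasurable[ℱ t] B := by
      have : B = fun ω => M t ω * ((1 - γhat t ω) * (1 - q)⁻¹) := by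
        funext ω; simp [hB, div_eq_mul_inv]
      rw [this]
      exact (hM_meas t).mul ((stronglyMeasurable_const.sub hγtm).mul stronglyMeasurable_const)
    have hB_abs : ∀ ω, |B ω| ≤ K ^ t * K := by
      intro ω
      rcases hγt ω with ⟨h1, h2⟩
      rw [hB, abs_mul]
      apply mul_le_mul (hM_abs t ω) _ (abs_nonneg _) (by positivity)
      rw [abs_of_nonneg (div_nonneg (by linarith) hq1'.le)]
      exact le_trans (by gcongr; linarith) hKq
    have hB_int : Integrable B μ :=
      integrable_of_bdd ((hB_meas.mono (ℱ.le t)).aestronglyMeasurable) hB_abs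
    have hAY_abs : ∀ ω, |A ω * Y (t + 1) ω| ≤ K ^ t * K * 1 := by
      intro ω
      rw [abs_mul]
      apply mul_le_mul _ _ (abs_nonneg _) (by positivity)
      · rw [hA, abs_mul]
        exact mul_le_mul (hM_abs t ω) (hcoef_abs ω) (abs_nonneg _) (by positivity)
      · rcases hbin (t + 1) ht1 ω with h | h <;> simp [h]
    have hY_meas : StronglyMeasurable[ℱ (t + 1)] (Y (t + 1)) := hmeas (t + 1) ht1
    have hY_int : Integrable (Y (t + 1)) μ := by
      apply integrable_of_bdd ((hY_meas.mono (ℱ.le (t + 1))).aestronglyMeasurable) (C := 1)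
      intro ω; rcases hbin (t + 1) ht1 ω with h | h <;> simp [h]
    have hAY_int : Integrable (A * Y (t + 1)) μ :=
      integrable_of_bdd (((hA_meas.mono (ℱ.le t)).mul
        (hY_meas.mono (ℱ.le (t + 1)))).aestronglyMeasurable) hAY_abs
    -- conditional expectation computation
    have h1 : μ[M (t + 1) | ℱ t] =ᵐ[μ] fun ω => B ω + A ω * (μ[Y (t + 1) | ℱ t]) ω := by
      have hd : M (t + 1) = B + A * Y (t + 1) := by
        rw [hdecomp]; rfl
      rw [hd]
      calc μ[B + A * Y (t + 1) | ℱ t]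
          =ᵐ[μ] μ[B | ℱ t] + μ[A * Y (t + 1) | ℱ t] := condExp_add hB_int hAY_int _
        _ =ᵐ[μ] B + A * μ[Y (t + 1) | ℱ t] :=
            Filter.EventuallyEq.add
              (Filter.EventuallyEq.of_eq
                (condExp_of_stronglyMeasurable (ℱ.le t) hB_meas hB_int))
              (condExp_mul_of_stronglyMeasurable_left hA_meas hAY_int hY_int)
        _ = fun ω => B ω + A ω * (μ[Y (t + 1) | ℱ t]) ω := rfl
    refine h1.le.trans ?_
    have hnull' : ∀ᵐ ω ∂μ, q ≤ (μ[Y (t + 1) | ℱ t]) ω := hnull (t + 1) ht1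
    filter_upwards [hnull'] with ω hω
    rcases hγt ω with ⟨h1, h2⟩
    have hAle : A ω ≤ 0 := by
      rw [hA]
      apply mul_nonpos_of_nonneg_of_nonpos (hM_nonneg t ω)
      have ha' : γhat t ω / q ≤ 1 := by rw [div_le_one hq0]; exact h2
      have hb' : 1 ≤ (1 - γhat t ω) / (1 - q) := by
        rw [le_div_iff₀ hq1']; linarith
      linarith
    have key : A ω * (μ[Y (t + 1) | ℱ t]) ω ≤ A ω * q :=
      mul_le_mul_of_nonpos_left hω hAle
    have hident : B ω + A ω * q = M t ω := by
      rw [hA, hB]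
      field_simp
      ring
    calc B ω + A ω * (μ[Y (t + 1) | ℱ t]) ω ≤ B ω + A ω * q := by linarith
      _ = M t ω := hident
  have hadp : StronglyAdapted ℱ M := fun t => hM_meas t
  have hsup : Supermartingale M ℱ μ := supermartingale_nat hadp hM_int hstep
  have hM0 : (∫ ω, M 0 ω ∂μ) = 1 := by
    have : M 0 = fun _ => (1:ℝ) := by
      funext ω; rw [hM 0 ω]; simp
    rw [this]; simp
  refine ⟨hsup, hM_nonneg, hM0, fun t => ?_⟩
  have h1 : μ[M t | ℱ 0] ≤ᵐ[μ] M 0 := hsup.2.1 0 t (Nat.zero_le t)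
  calc (∫ ω, M t ω ∂μ) = ∫ ω, (μ[M t | ℱ 0]) ω ∂μ := (integral_condExp (ℱ.le 0)).symm
    _ ≤ ∫ ω, M 0 ω ∂μ := integral_mono_ae integrable_condExp (hM_int 0) h1
    _ = 1 := hM0
end

section
/- (Positive expected log-growth of the LR e-process under the alternative.) Let q, δ, p ∈ ℝ with 0 < q − δ, q < 1, δ > 0, and 0 ≤ p ≤ q − δ. Then p · log((q − δ)/q) + (1 − p) · log((1 − q + δ)/(1 − q)) > 0. -/
/-!
Write `a = q - δ`. As a function of `p`, the expected log-increment is affine with slope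
`log (a / q) - log ((1 - a) / (1 - q)) ≤ 0`, so for `p ≤ a` it is at least its value at
`p = a`. That value is the Bernoulli Kullback–Leibler divergence `KL(a ‖ q)`, positive
since `a ≠ q`.
-/

open Real InformationTheory

noncomputable section

/-- Expected log-increment, under a Bernoulli(`p`) observation, of the likelihood ratio of
Bernoulli(`a`) against Bernoulli(`q`). -/
def bernoulliLogLRDrift (p a q : ℝ) : ℝ :=
  p * log (a / q) + (1 - p) * log ((1 - a) / (1 - q))

lemma bernoulliLogLRDrift_self_eq_klFun {a q : ℝ} (hq₀ : 0 < q) (hq₁ : q < 1) :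
    bernoulliLogLRDrift a a q = q * klFun (a / q) + (1 - q) * klFun ((1 - a) / (1 - q)) := by
  have h₁ : 1 - q ≠ 0 := by linarith
  simp only [bernoulliLogLRDrift, klFun_apply]
  field_simp
  ring

lemma bernoulliLogLRDrift_self_pos {a q : ℝ} (ha₀ : 0 ≤ a) (ha₁ : a ≤ 1) (hq₀ : 0 < q)
    (hq₁ : q < 1) (haq : a ≠ q) : 0 < bernoulliLogLRDrift a a q := by
  rw [bernoulliLogLRDrift_self_eq_klFun hq₀ hq₁]
  have hne : a / q ≠ 1 := fun h => haq ((div_eq_one_iff_eq hq₀.ne').1 h)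
  have hpos : 0 < klFun (a / q) :=
    lt_of_le_of_ne (klFun_nonneg (by positivity))
      (fun h => hne ((klFun_eq_zero_iff (by positivity)).1 h.symm))
  have hnonneg : 0 ≤ klFun ((1 - a) / (1 - q)) :=
    klFun_nonneg (div_nonneg (by linarith) (by linarith))
  have h₁ : 0 ≤ 1 - q := by linarith
  positivity

lemma bernoulliLogLRDrift_antitone {a q : ℝ} (ha₀ : 0 ≤ a) (haq : a ≤ q) (hq₁ : q < 1) :
    Antitone fun p => bernoulliLogLRDrift p a q := by
  have hq₀ : 0 ≤ q := ha₀.trans haq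
  have hnull : log (a / q) ≤ 0 :=
    log_nonpos (div_nonneg ha₀ hq₀) (div_le_one_of_le₀ haq hq₀)
  have halt : 0 ≤ log ((1 - a) / (1 - q)) :=
    log_nonneg ((one_le_div (by linarith)).2 (by linarith))
  intro p p' hpp'
  simp only [bernoulliLogLRDrift]
  nlinarith [mul_nonneg (sub_nonneg.2 hpp') (sub_nonneg.2 (hnull.trans halt))]

end

theorem lr_positive_log_growth_general
    (q δ p : ℝ) (hqδ : 0 < q - δ) (hq : q < 1) (hδ : 0 < δ)
    (hp : p ≤ q - δ) :
    p * Real.log ((q - δ) / q) + (1 - p) * Real.log ((1 - q + δ) / (1 - q)) > 0 := by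
  have hshift : 1 - q + δ = 1 - (q - δ) := by ring
  have hkl : 0 < bernoulliLogLRDrift (q - δ) (q - δ) q :=
    bernoulliLogLRDrift_self_pos hqδ.le (by linarith) (by linarith) hq (by linarith)
  rw [hshift]
  exact hkl.trans_le (bernoulliLogLRDrift_antitone hqδ.le (by linarith) hq hp)

/-- Positive expected log-growth of the LR e-process under the alternative: when
the sampled subgroup's score `p` is separated below the threshold `q` by `δ`, the
expected log-increment of the likelihood-ratio e-process is strictly positive. -/
theorem lr_positive_log_growth
    (q δ p : ℝ) (hqδ : 0 < q - δ) (hq : q < 1) (hδ : 0 < δ)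
    (hp0 : 0 ≤ p) (hp : p ≤ q - δ) :
    p * Real.log ((q - δ) / q) + (1 - p) * Real.log ((1 - q + δ) / (1 - q)) > 0 :=
  lr_positive_log_growth_general q δ p hqδ hq hδ hp
end
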